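/- If γ > t_m, then every eigenvalue λ of H has nonzero imaginary part; in particular H has no real eigenvalue. -/

import Mathlib

/-! For real `μ`, an eigenvector `u` carries the current `J k = t k * Im (conj (u k) * u (k+1))`,
which changes only across sites with complex potential: `J (k-1) - J k = Im (z k) * |u k|²`.
It vanishes at both ends, so it vanishes left of site `m` and right of site `m+1`, giving
`J m = -γ |u m|² = -γ |u (m+1)|²`. Since `|J m| ≤ t m * |u m| * |u (m+1)|` and `t m < γ`,
this forces `u m = u (m+1) = 0`, and the recurrence with nonzero hoppings then kills `u`. -/

open Matrix Complex

/-- The `2m × 2m` tridiagonal Hamiltonian with diagonal entries `z 1, …, z n`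
(1-based) and symmetric off-diagonal entries `t 1, …, t (n-1)`. -/
noncomputable def Hop (m : ℕ) (t : ℕ → ℝ) (z : ℕ → ℂ) :
    Matrix (Fin (2*m)) (Fin (2*m)) ℂ :=
  fun i j =>
    if (i : ℕ) = (j : ℕ) then z ((i : ℕ) + 1)
    else if (i : ℕ) + 1 = (j : ℕ) then ((t ((i : ℕ) + 1) : ℝ) : ℂ)
    else if (j : ℕ) + 1 = (i : ℕ) then ((t ((j : ℕ) + 1) : ℝ) : ℂ)
    else 0

/-- The block matrix `M(Z) = [[1, (conj Z / t_m) P_m],[(Z / t_m) P_m, 1]]`. -/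
noncomputable def Mop (m : ℕ) (t : ℕ → ℝ) (Z : ℂ) :
    Matrix (Fin (2*m)) (Fin (2*m)) ℂ :=
  fun i j =>
    if i = j then 1
    else if (i : ℕ) + (j : ℕ) + 1 = 2*m then
      (if (i : ℕ) < m then (starRingEnd ℂ) Z / (t m : ℂ) else Z / (t m : ℂ))
    else 0

open ComplexConjugate

lemma Matrix.exists_mulVec_eq_smul_of_mem_spectrum {n K : Type*} [Fintype n] [DecidableEq n]
    [Field K] {A : Matrix n n K} {μ : K} (hμ : μ ∈ spectrum K A) :
    ∃ v ≠ 0, A *ᵥ v = μ • v := by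
  rw [← Matrix.spectrum_toLin', ← Module.End.hasEigenvalue_iff_mem_spectrum] at hμ
  obtain ⟨v, hv⟩ := hμ.exists_hasEigenvector
  exact ⟨v, hv.2, by simpa using hv.apply_eq_smul⟩

section ExtendByZero

variable {α : Type*} [Zero α] {n : ℕ}

/-- `v` reindexed from `1`, as the rows of `Hop` are, with zero boundary values. -/
def extendByZero (v : Fin n → α) : ℕ → α
  | 0 => 0
  | j + 1 => if h : j < n then v ⟨j, h⟩ else 0

@[simp] lemma extendByZero_zero (v : Fin n → α) : extendByZero v 0 = 0 := rfl

@[simp] lemma extendByZero_succ (v : Fin n → α) (i : Fin n) :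
    extendByZero v (i + 1) = v i := by
  simp [extendByZero]

lemma extendByZero_of_lt {j : ℕ} (v : Fin n → α) (hj : n < j) : extendByZero v j = 0 := by
  obtain ⟨j, rfl⟩ : ∃ i, j = i + 1 := ⟨j - 1, by omega⟩
  simp [extendByZero, show ¬ j < n by omega]

end ExtendByZero

lemma Hop_mulVec_apply (m : ℕ) (t : ℕ → ℝ) (z : ℕ → ℂ) (v : Fin (2*m) → ℂ) (i : Fin (2*m)) :
    (Hop m t z *ᵥ v) i = t i * extendByZero v i + z (i + 1) * extendByZero v (i + 1)
      + t (i + 1) * extendByZero v (i + 2) := by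
  set e := extendByZero v
  calc (Hop m t z *ᵥ v) i
      = ∑ j ∈ Finset.range (2*m), (if (i : ℕ) = j then z (i + 1)
          else if (i : ℕ) + 1 = j then (t (i + 1) : ℂ)
          else if j + 1 = i then (t (j + 1) : ℂ) else 0) * e (j + 1) := by
        rw [← Fin.sum_univ_eq_sum_range]
        simp only [mulVec, dotProduct, Hop, e, extendByZero_succ]
    _ = ∑ j ∈ Finset.range (2*m), ((if j + 1 = i then t i * e i else 0)
          + (if j = i then z (i + 1) * e (i + 1) else 0)
          + (if j = i + 1 then t (i + 1) * e (i + 2) else 0)) := by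
        refine Finset.sum_congr rfl fun j _ => ?_
        split_ifs <;> first | omega | (subst j; ring) | (rw [← ‹j + 1 = (i : ℕ)›]; ring) | ring
    _ = _ := by
        have hprev : (∑ j ∈ Finset.range (2*m), if j + 1 = i then (t i : ℂ) * e i else 0)
            = t i * e i := by
          rcases i with ⟨_ | p, hi⟩
          · simp [e]
          · simp [Finset.sum_ite_eq', show p < 2 * m by omega]
        have hnext : (if (i : ℕ) + 1 < 2*m then (t (i + 1) : ℂ) * e (i + 2) else 0)
            = t (i + 1) * e (i + 2) := by
          split_ifs with h
          · rfl
          · rw [show e (i + 2) = 0 from extendByZero_of_lt v (by omega), mul_zero]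
        rw [Finset.sum_add_distrib, Finset.sum_add_distrib, hprev, Finset.sum_ite_eq',
          Finset.sum_ite_eq', if_pos (Finset.mem_range.mpr i.2)]
        simp only [Finset.mem_range, hnext]

/-- Rows `1, …, N` of `(H - μ) u = 0` for the tridiagonal `H` with hoppings `t` and diagonal `z`;
`u 0` and `u (N + 1)` act as boundary values. -/
def SolvesTridiagonal (t : ℕ → ℝ) (z : ℕ → ℂ) (μ : ℂ) (N : ℕ) (u : ℕ → ℂ) : Prop :=
  ∀ k < N, (t k : ℂ) * u k + z (k + 1) * u (k + 1) + t (k + 1) * u (k + 2) = μ * u (k + 1)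

lemma solvesTridiagonal_extendByZero {m : ℕ} {t : ℕ → ℝ} {z : ℕ → ℂ} {μ : ℂ}
    {v : Fin (2*m) → ℂ} (hv : Hop m t z *ᵥ v = μ • v) :
    SolvesTridiagonal t z μ (2*m) (extendByZero v) := by
  intro k hk
  have hrow := congrFun hv ⟨k, hk⟩
  rwa [Hop_mulVec_apply, Pi.smul_apply, smul_eq_mul, ← extendByZero_succ v] at hrow

def current (t : ℕ → ℝ) (u : ℕ → ℂ) (k : ℕ) : ℝ := t k * (conj (u k) * u (k + 1)).im

lemma abs_current_le (t : ℕ → ℝ) (u : ℕ → ℂ) (k : ℕ) :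
    |current t u k| ≤ |t k| * (‖u k‖ * ‖u (k + 1)‖) := by
  rw [current, abs_mul]
  gcongr
  simpa using abs_im_le_norm (conj (u k) * u (k + 1))

namespace SolvesTridiagonal

variable {t : ℕ → ℝ} {z : ℕ → ℂ} {μ : ℂ} {N : ℕ} {u : ℕ → ℂ}

lemma current_sub_current_succ (hu : SolvesTridiagonal t z μ N u) (hμ : μ.im = 0) {k : ℕ}
    (hk : k < N) :
    current t u k - current t u (k + 1) = (z (k + 1)).im * normSq (u (k + 1)) := by
  have hrow := congrArg (fun w => (conj (u (k + 1)) * w).im) (hu k hk)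
  simp only [current, mul_add, add_im, mul_im, mul_re, conj_re, conj_im, ofReal_re, ofReal_im,
    hμ, normSq_apply] at hrow ⊢
  linear_combination -hrow

lemma current_eq_of_im_eq_zero (hu : SolvesTridiagonal t z μ N u) (hμ : μ.im = 0) {a b : ℕ}
    (hab : a ≤ b) (hbN : b ≤ N) (hz : ∀ k, a < k → k ≤ b → (z k).im = 0) :
    current t u b = current t u a := by
  induction b, hab using Nat.le_induction with
  | base => rfl
  | succ b hab ih =>
    have hstep := hu.current_sub_current_succ hμ (k := b) (by omega)
    rw [hz (b + 1) (by omega) le_rfl, zero_mul, sub_eq_zero] at hstep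
    rw [← hstep, ih (by omega) fun k h₁ _ => hz k h₁ (by omega)]

lemma eq_zero_of_barrier (hu : SolvesTridiagonal t z μ N u) (hμ : μ.im = 0) {k : ℕ} {γ : ℝ}
    (hk : k + 1 < N) (hleft : current t u k = 0) (hright : current t u (k + 2) = 0)
    (hz₁ : (z (k + 1)).im = γ) (hz₂ : (z (k + 2)).im = -γ) (ht : |t (k + 1)| < γ) :
    u (k + 1) = 0 ∧ u (k + 2) = 0 := by
  have h₁ := hu.current_sub_current_succ hμ (k := k) (by omega)
  have h₂ := hu.current_sub_current_succ hμ (k := k + 1) hk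
  have hbound := abs_current_le t u (k + 1)
  rw [hleft, hz₁, normSq_eq_norm_sq] at h₁
  rw [hright, hz₂, normSq_eq_norm_sq] at h₂
  set a := ‖u (k + 1)‖
  set b := ‖u (k + 2)‖
  have hγ : 0 < γ := (abs_nonneg _).trans_lt ht
  have hab : a = b := by
    have : a ^ 2 = b ^ 2 := mul_left_cancel₀ hγ.ne' (by linarith)
    exact (sq_eq_sq₀ (norm_nonneg _) (norm_nonneg _)).mp this
  have ha : a = 0 := by
    rw [← hab, show current t u (k + 1) = -(γ * a ^ 2) by linarith, abs_neg,
      abs_of_nonneg (by positivity)] at hbound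
    have : (γ - |t (k + 1)|) * a ^ 2 ≤ 0 := by linarith
    exact pow_eq_zero_iff two_ne_zero |>.mp
      (le_antisymm (nonpos_of_mul_nonpos_right this (sub_pos.mpr ht)) (sq_nonneg a))
  exact ⟨norm_eq_zero.mp ha, norm_eq_zero.mp (hab.symm.trans ha)⟩

lemma eq_zero_of_succ_succ (hu : SolvesTridiagonal t z μ N u) {k : ℕ} (hk : k < N)
    (ht : t (k + 1) ≠ 0) (h₀ : u k = 0) (h₁ : u (k + 1) = 0) : u (k + 2) = 0 := by
  have hrow := hu k hk
  rw [h₀, h₁] at hrow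
  simpa [ht] using hrow

lemma eq_zero_of_pred_pred (hu : SolvesTridiagonal t z μ N u) {k : ℕ} (hk : k < N)
    (ht : t k ≠ 0) (h₁ : u (k + 1) = 0) (h₂ : u (k + 2) = 0) : u k = 0 := by
  have hrow := hu k hk
  rw [h₁, h₂] at hrow
  simpa [ht] using hrow

lemma eq_zero_of_consecutive (hu : SolvesTridiagonal t z μ N u)
    (ht : ∀ k, 1 ≤ k → k < N → t k ≠ 0) {a : ℕ} (ha : a < N) (h₀ : u a = 0)
    (h₁ : u (a + 1) = 0) : ∀ j, 1 ≤ j → j ≤ N → u j = 0 := by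
  have hup : ∀ j, a ≤ j → j < N → u j = 0 ∧ u (j + 1) = 0 := by
    intro j hj
    induction j, hj using Nat.le_induction with
    | base => exact fun _ => ⟨h₀, h₁⟩
    | succ j _ ih =>
      intro hjN
      obtain ⟨hj₀, hj₁⟩ := ih (by omega)
      exact ⟨hj₁, hu.eq_zero_of_succ_succ (by omega) (ht _ (by omega) hjN) hj₀ hj₁⟩
  have hdown : ∀ d j, j + d = a → 1 ≤ j → u j = 0 ∧ u (j + 1) = 0 := by
    intro d
    induction d with
    | zero => rintro j rfl -; exact ⟨h₀, h₁⟩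
    | succ d ih =>
      intro j hj h1j
      obtain ⟨hj₁, hj₂⟩ := ih (j + 1) (by omega) (by omega)
      exact ⟨hu.eq_zero_of_pred_pred (by omega) (ht j h1j (by omega)) hj₁ hj₂, hj₁⟩
  intro j h1j hjN
  rcases lt_or_ge j a with hja | hja
  · exact (hdown (a - j) j (by omega) h1j).1
  · rcases hjN.lt_or_eq with hjN | rfl
    · exact (hup j hja hjN).1
    · simpa [Nat.sub_add_cancel h1j] using (hup (j - 1) (by omega) (by omega)).2

end SolvesTridiagonal

theorem stmt6 (m : ℕ) (hm : 1 ≤ m) (t : ℕ → ℝ) (z : ℕ → ℂ)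
    (ht0 : ∀ j, 1 ≤ j → j ≤ 2*m - 1 → t j ≠ 0)
    (htm : 0 < t m)
    (hzreal : ∀ j, 1 ≤ j → j ≤ 2*m → j ≠ m → j ≠ m + 1 → (z j).im = 0)
    (hzsym : ∀ j, 1 ≤ j → j ≤ 2*m → z (2*m + 1 - j) = (starRingEnd ℂ) (z j))
    (hγgt : t m < (z m).im) :
    ∀ μ ∈ spectrum ℂ (Hop m t z), μ.im ≠ 0 := by
  intro μ hμ hμreal
  obtain ⟨v, hv0, hv⟩ := Matrix.exists_mulVec_eq_smul_of_mem_spectrum hμ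
  have hu := solvesTridiagonal_extendByZero hv
  obtain ⟨p, rfl⟩ : ∃ p, m = p + 1 := ⟨m - 1, by omega⟩
  have hleft : current t (extendByZero v) p = 0 := by
    rw [hu.current_eq_of_im_eq_zero hμreal (Nat.zero_le p) (by omega)
      fun k h₁ h₂ => hzreal k h₁ (by omega) (by omega) (by omega)]
    simp [current]
  have hright : current t (extendByZero v) (p + 2) = 0 := by
    rw [← hu.current_eq_of_im_eq_zero hμreal (a := p + 2) (by omega) le_rfl
      fun k h₁ h₂ => hzreal k (by omega) h₂ (by omega) (by omega)]
    simp [current, extendByZero_of_lt v (show 2 * (p + 1) < 2 * (p + 1) + 1 by omega)]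
  have hz : (z (p + 2)).im = -(z (p + 1)).im := by
    rw [show p + 2 = 2 * (p + 1) + 1 - (p + 1) by omega, hzsym _ hm (by omega), conj_im]
  obtain ⟨h₁, h₂⟩ := hu.eq_zero_of_barrier hμreal (by omega) hleft hright rfl hz
    (by rwa [abs_of_pos htm])
  have hzero := hu.eq_zero_of_consecutive (fun k h₁ h₂ => ht0 k h₁ (by omega)) (by omega) h₁ h₂
  exact hv0 (funext fun i => by simpa using hzero (i + 1) (by omega) (by omega))
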